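/- Consider the reference square K̂ = [−1,1]² with vertices (±1,±1), the bubble b(x,y) = (1−x²)(1−y²), and the 20-dimensional space W̃* = P₃ ⊕ span{x³y, xy³} ⊕ span{b·φ : φ ∈ {x, y, x²y, xy², x⁴, y⁴, x³y, xy³}}. If v ∈ W̃* satisfies the 20 conditions: v vanishes at the four vertices; both partial derivatives ∂v/∂x and ∂v/∂y vanish at the four vertices; ∫₋₁¹ (∂v/∂y)(x,−1) dx = ∫₋₁¹ (∂v/∂y)(x,1) dx = ∫₋₁¹ (∂v/∂x)(−1,y) dy = ∫₋₁¹ (∂v/∂x)(1,y) dy = 0; and ∫₋₁¹ (∂v/∂y)(x,−1)·x dx = ∫₋₁¹ (∂v/∂y)(x,1)·x dx = ∫₋₁¹ (∂v/∂x)(−1,y)·y dy = ∫₋₁¹ (∂v/∂x)(1,y)·y dy = 0, then v is the zero polynomial. -/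

import Mathlib

/-!
The bubble `b` and its gradient vanish at the four corners, so the twelve vertex conditions only
see the component `q ∈ P₃ ⊕ span{x³y, xy³}` of `v`, and on that twelve-dimensional space they form
a nonsingular system: `q = 0`. Hence `v = b φ`. On an edge `y = ±1` the bubble vanishes and
`∂_y b = ∓2 (1 - x²)`, so `∂_y (b φ) = ∓2 (1 - x²) φ(x, ±1)`, and likewise on `x = ±1`. The eight
edge conditions thus become the moments of order `0` and `1` of `φ` against the weight `1 - t²`
on the four edges, and these determine the eight coefficients of `φ`.
-/

open MvPolynomial

/-- The bubble `b(x,y) = (1 − x²)(1 − y²)` on the reference square `[−1,1]²`. -/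
noncomputable def bub : MvPolynomial (Fin 2) ℝ :=
  (1 - X 0 ^ 2) * (1 - X 1 ^ 2)

/-- Membership in the 20-dimensional auxiliary space
`W̃* = P₃ ⊕ span{x³y, xy³} ⊕ span{b·φ : φ ∈ {x, y, x²y, xy², x⁴, y⁴, x³y, xy³}}`. -/
def memWtilde (v : MvPolynomial (Fin 2) ℝ) : Prop :=
  ∃ (p : MvPolynomial (Fin 2) ℝ) (c1 c2 d1 d2 d3 d4 d5 d6 d7 d8 : ℝ),
    p.totalDegree ≤ 3 ∧
    v = p + C c1 * X 0 ^ 3 * X 1 + C c2 * X 0 * X 1 ^ 3 +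
      bub * (C d1 * X 0 + C d2 * X 1 + C d3 * X 0 ^ 2 * X 1 + C d4 * X 0 * X 1 ^ 2 +
        C d5 * X 0 ^ 4 + C d6 * X 1 ^ 4 + C d7 * X 0 ^ 3 * X 1 + C d8 * X 0 * X 1 ^ 3)

namespace MvPolynomial

variable {R : Type*} [CommSemiring R]

theorem monomial_single_add_single (i j : ℕ) (a : R) :
    monomial (Finsupp.single (0 : Fin 2) i + Finsupp.single 1 j) a = C a * X 0 ^ i * X 1 ^ j := by
  rw [X_pow_eq_monomial, X_pow_eq_monomial, C_mul_monomial, monomial_mul, mul_one, mul_one]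

open Finset in
theorem eq_sum_monomials_of_totalDegree_le {p : MvPolynomial (Fin 2) R} {n : ℕ}
    (hp : p.totalDegree ≤ n) :
    p = ∑ i ∈ range (n + 1), ∑ j ∈ range (n + 1 - i),
      C (coeff (Finsupp.single 0 i + Finsupp.single 1 j) p) * X 0 ^ i * X 1 ^ j := by
  simp_rw [← monomial_single_add_single]
  ext d
  have hd : Finsupp.single 0 (d 0) + Finsupp.single 1 (d 1) = d := by
    ext k; fin_cases k <;> simp
  have hsingle : ∀ i j, Finsupp.single (0 : Fin 2) i + Finsupp.single 1 j = d ↔ i = d 0 ∧ j = d 1 := by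
    refine fun i j => ⟨?_, ?_⟩
    · rintro rfl; simp
    · rintro ⟨rfl, rfl⟩; exact hd
  simp only [coeff_sum, coeff_monomial, hsingle, ite_and, sum_ite_irrel, sum_ite_eq', mem_range,
    sum_const_zero, Order.lt_add_one_iff, hd]
  split_ifs <;> try rfl
  all_goals
    refine coeff_eq_zero_of_totalDegree_lt (hp.trans_lt ?_)
    rw [sum_subset (subset_univ _) (fun i _ hi => Finsupp.notMem_support_iff.mp hi),
      Fin.sum_univ_two]
    omega

theorem exists_eq_of_totalDegree_le_three {p : MvPolynomial (Fin 2) R} (hp : p.totalDegree ≤ 3) :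
    ∃ a00 a10 a01 a20 a11 a02 a30 a21 a12 a03 : R,
      p = C a00 + C a10 * X 0 + C a01 * X 1 + C a20 * X 0 ^ 2 + C a11 * X 0 * X 1 + C a02 * X 1 ^ 2 +
        C a30 * X 0 ^ 3 + C a21 * X 0 ^ 2 * X 1 + C a12 * X 0 * X 1 ^ 2 + C a03 * X 1 ^ 3 := by
  let a (i j : ℕ) : R := coeff (Finsupp.single 0 i + Finsupp.single 1 j) p
  refine ⟨a 0 0, a 1 0, a 0 1, a 2 0, a 1 1, a 0 2, a 3 0, a 2 1, a 1 2, a 0 3, ?_⟩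
  conv_lhs => rw [eq_sum_monomials_of_totalDegree_le hp]
  simp only [Finset.sum_range_succ, Finset.sum_range_zero, a]
  ring

end MvPolynomial

theorem pderiv_zero_bub : pderiv 0 bub = -2 * X 0 * (1 - X 1 ^ 2) := by
  rw [bub, Derivation.leibniz, map_sub, map_sub, Derivation.map_one_eq_zero, Derivation.leibniz_pow,
    Derivation.leibniz_pow, pderiv_X_self, pderiv_X_of_ne one_ne_zero]
  simp only [smul_eq_mul, nsmul_eq_mul]
  ring

theorem pderiv_one_bub : pderiv 1 bub = -2 * X 1 * (1 - X 0 ^ 2) := by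
  rw [bub, Derivation.leibniz, map_sub, map_sub, Derivation.map_one_eq_zero, Derivation.leibniz_pow,
    Derivation.leibniz_pow, pderiv_X_self, pderiv_X_of_ne zero_ne_one]
  simp only [smul_eq_mul, nsmul_eq_mul]
  ring

theorem eval_bub (x y : ℝ) : eval ![x, y] bub = (1 - x ^ 2) * (1 - y ^ 2) := by
  simp [bub]

theorem eval_pderiv_zero_bub (x y : ℝ) : eval ![x, y] (pderiv 0 bub) = -2 * x * (1 - y ^ 2) := by
  simp [pderiv_zero_bub]

theorem eval_pderiv_one_bub (x y : ℝ) : eval ![x, y] (pderiv 1 bub) = -2 * y * (1 - x ^ 2) := by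
  simp [pderiv_one_bub]

theorem eval_pderiv_zero_bub_mul (φ : MvPolynomial (Fin 2) ℝ) {x y : ℝ} (hx : x ^ 2 = 1) :
    eval ![x, y] (pderiv 0 (bub * φ)) = -2 * x * (1 - y ^ 2) * eval ![x, y] φ := by
  rw [Derivation.leibniz, map_add, smul_eq_mul, smul_eq_mul, map_mul, map_mul, eval_bub,
    eval_pderiv_zero_bub, hx, sub_self, zero_mul, zero_mul, zero_add, mul_comm]

theorem eval_pderiv_one_bub_mul (φ : MvPolynomial (Fin 2) ℝ) {x y : ℝ} (hy : y ^ 2 = 1) :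
    eval ![x, y] (pderiv 1 (bub * φ)) = -2 * y * (1 - x ^ 2) * eval ![x, y] φ := by
  rw [Derivation.leibniz, map_add, smul_eq_mul, smul_eq_mul, map_mul, map_mul, eval_bub,
    eval_pderiv_one_bub, hy, sub_self, mul_zero, zero_mul, zero_add, mul_comm]

def VanishesWithGradientAt (q : MvPolynomial (Fin 2) ℝ) (z : Fin 2 → ℝ) : Prop :=
  eval z q = 0 ∧ eval z (pderiv 0 q) = 0 ∧ eval z (pderiv 1 q) = 0

theorem VanishesWithGradientAt.sub {q r : MvPolynomial (Fin 2) ℝ} {z : Fin 2 → ℝ}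
    (hq : VanishesWithGradientAt q z) (hr : VanishesWithGradientAt r z) :
    VanishesWithGradientAt (q - r) z := by
  simp only [VanishesWithGradientAt, map_sub, hq.1, hq.2.1, hq.2.2, hr.1, hr.2.1, hr.2.2, sub_zero,
    and_self]

theorem vanishesWithGradientAt_bub_mul (φ : MvPolynomial (Fin 2) ℝ) {x y : ℝ} (hx : x ^ 2 = 1)
    (hy : y ^ 2 = 1) : VanishesWithGradientAt (bub * φ) ![x, y] := by
  simp only [VanishesWithGradientAt, Derivation.leibniz, map_add, map_mul, smul_eq_mul, eval_bub,
    eval_pderiv_zero_bub, eval_pderiv_one_bub, hx, hy, sub_self, mul_zero, zero_mul, add_zero,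
    and_self]

theorem eq_zero_of_vanishesWithGradientAt_corners {p : MvPolynomial (Fin 2) ℝ}
    (hp : p.totalDegree ≤ 3) {c1 c2 : ℝ}
    (h : ∀ x y : ℝ, x ^ 2 = 1 → y ^ 2 = 1 →
      VanishesWithGradientAt (p + C c1 * X 0 ^ 3 * X 1 + C c2 * X 0 * X 1 ^ 3) ![x, y]) :
    p + C c1 * X 0 ^ 3 * X 1 + C c2 * X 0 * X 1 ^ 3 = 0 := by
  obtain ⟨a00, a10, a01, a20, a11, a02, a30, a21, a12, a03, rfl⟩ :=
    exists_eq_of_totalDegree_le_three hp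
  obtain ⟨hv1, hx1, hy1⟩ := h (-1) (-1) (by norm_num) (by norm_num)
  obtain ⟨hv2, hx2, hy2⟩ := h 1 (-1) (by norm_num) (by norm_num)
  obtain ⟨hv3, hx3, hy3⟩ := h 1 1 (by norm_num) (by norm_num)
  obtain ⟨hv4, hx4, hy4⟩ := h (-1) 1 (by norm_num) (by norm_num)
  simp only [map_add, map_mul, map_pow, eval_C, eval_X, Derivation.leibniz, Derivation.leibniz_pow,
    derivation_C, pderiv_X_self, pderiv_X_of_ne one_ne_zero, pderiv_X_of_ne zero_ne_one,
    smul_eq_mul, nsmul_eq_mul, Matrix.cons_val_zero, Matrix.cons_val_one, Matrix.cons_val_fin_one,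
    map_zero, map_one, map_ofNat, Nat.cast_ofNat, Nat.reduceSub]
    at hv1 hv2 hv3 hv4 hx1 hx2 hx3 hx4 hy1 hy2 hy3 hy4
  obtain ⟨rfl, rfl, rfl, rfl, rfl, rfl, rfl, rfl, rfl, rfl, rfl, rfl⟩ :
      a00 = 0 ∧ a10 = 0 ∧ a01 = 0 ∧ a20 = 0 ∧ a11 = 0 ∧ a02 = 0 ∧ a30 = 0 ∧ a21 = 0 ∧ a12 = 0 ∧
        a03 = 0 ∧ c1 = 0 ∧ c2 = 0 := by
    refine ⟨?_, ?_, ?_, ?_, ?_, ?_, ?_, ?_, ?_, ?_, ?_, ?_⟩ <;> linarith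
  simp

def NormalMomentsVanish (v : MvPolynomial (Fin 2) ℝ) : Prop :=
  ∀ s : ℝ, s ^ 2 = 1 →
    (∫ x in (-1:ℝ)..1, eval ![x, s] (pderiv 1 v)) = 0 ∧
    (∫ x in (-1:ℝ)..1, eval ![x, s] (pderiv 1 v) * x) = 0 ∧
    (∫ y in (-1:ℝ)..1, eval ![s, y] (pderiv 0 v)) = 0 ∧
    (∫ y in (-1:ℝ)..1, eval ![s, y] (pderiv 0 v) * y) = 0

noncomputable def bubbleMultiplier (d1 d2 d3 d4 d5 d6 d7 d8 : ℝ) : MvPolynomial (Fin 2) ℝ :=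
  C d1 * X 0 + C d2 * X 1 + C d3 * X 0 ^ 2 * X 1 + C d4 * X 0 * X 1 ^ 2 +
    C d5 * X 0 ^ 4 + C d6 * X 1 ^ 4 + C d7 * X 0 ^ 3 * X 1 + C d8 * X 0 * X 1 ^ 3

theorem bubbleMultiplier_eq_zero_of_normalMomentsVanish {d1 d2 d3 d4 d5 d6 d7 d8 : ℝ}
    (h : NormalMomentsVanish (bub * bubbleMultiplier d1 d2 d3 d4 d5 d6 d7 d8)) :
    bubbleMultiplier d1 d2 d3 d4 d5 d6 d7 d8 = 0 := by
  obtain ⟨hN1, hM1, hN3, hM3⟩ := h (-1) (by norm_num)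
  obtain ⟨hN2, hM2, hN4, hM4⟩ := h 1 (by norm_num)
  simp (disch := norm_num) only [eval_pderiv_one_bub_mul, eval_pderiv_zero_bub_mul,
    bubbleMultiplier, map_add, map_mul, map_pow, eval_C, eval_X, Matrix.cons_val_zero,
    Matrix.cons_val_one] at hN1 hN2 hN3 hN4 hM1 hM2 hM3 hM4
  ring_nf at hN1 hN2 hN3 hN4 hM1 hM2 hM3 hM4
  -- `f := fun x => x` because simp cannot match `∫ d * x` against the pattern `∫ r * f x`
  simp (disch := apply Continuous.intervalIntegrable; fun_prop) only [intervalIntegral.integral_add,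
    intervalIntegral.integral_sub, intervalIntegral.integral_neg, intervalIntegral.integral_mul_const,
    intervalIntegral.integral_const_mul (f := fun x => x), intervalIntegral.integral_const,
    integral_id, integral_pow] at hN1 hN2 hN3 hN4 hM1 hM2 hM3 hM4
  norm_num at hN1 hN2 hN3 hN4 hM1 hM2 hM3 hM4
  obtain ⟨rfl, rfl, rfl, rfl, rfl, rfl, rfl, rfl⟩ :
      d1 = 0 ∧ d2 = 0 ∧ d3 = 0 ∧ d4 = 0 ∧ d5 = 0 ∧ d6 = 0 ∧ d7 = 0 ∧ d8 = 0 := by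
    refine ⟨?_, ?_, ?_, ?_, ?_, ?_, ?_, ?_⟩ <;> linarith
  simp [bubbleMultiplier]

/-- unisolvency of the 20 degrees of freedom (vertex values,
vertex gradients, edge integrals and first moments of the normal derivative)
of the auxiliary C⁰ nonconforming plate element on the reference square. -/
theorem stmt16 (v : MvPolynomial (Fin 2) ℝ) (hv : memWtilde v)
    (hV1 : eval ![(-1:ℝ), -1] v = 0)
    (hV2 : eval ![(1:ℝ), -1] v = 0)
    (hV3 : eval ![(1:ℝ), 1] v = 0)
    (hV4 : eval ![(-1:ℝ), 1] v = 0)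
    (hGx1 : eval ![(-1:ℝ), -1] (pderiv 0 v) = 0)
    (hGx2 : eval ![(1:ℝ), -1] (pderiv 0 v) = 0)
    (hGx3 : eval ![(1:ℝ), 1] (pderiv 0 v) = 0)
    (hGx4 : eval ![(-1:ℝ), 1] (pderiv 0 v) = 0)
    (hGy1 : eval ![(-1:ℝ), -1] (pderiv 1 v) = 0)
    (hGy2 : eval ![(1:ℝ), -1] (pderiv 1 v) = 0)
    (hGy3 : eval ![(1:ℝ), 1] (pderiv 1 v) = 0)
    (hGy4 : eval ![(-1:ℝ), 1] (pderiv 1 v) = 0)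
    (hN1 : (∫ x in (-1:ℝ)..1, eval ![x, -1] (pderiv 1 v)) = 0)
    (hN2 : (∫ x in (-1:ℝ)..1, eval ![x, 1] (pderiv 1 v)) = 0)
    (hN3 : (∫ y in (-1:ℝ)..1, eval ![(-1:ℝ), y] (pderiv 0 v)) = 0)
    (hN4 : (∫ y in (-1:ℝ)..1, eval ![(1:ℝ), y] (pderiv 0 v)) = 0)
    (hM1 : (∫ x in (-1:ℝ)..1, eval ![x, -1] (pderiv 1 v) * x) = 0)
    (hM2 : (∫ x in (-1:ℝ)..1, eval ![x, 1] (pderiv 1 v) * x) = 0)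
    (hM3 : (∫ y in (-1:ℝ)..1, eval ![(-1:ℝ), y] (pderiv 0 v) * y) = 0)
    (hM4 : (∫ y in (-1:ℝ)..1, eval ![(1:ℝ), y] (pderiv 0 v) * y) = 0) :
    v = 0 := by
  obtain ⟨p, c1, c2, d1, d2, d3, d4, d5, d6, d7, d8, hp, hv⟩ := hv
  replace hv : v = (p + C c1 * X 0 ^ 3 * X 1 + C c2 * X 0 * X 1 ^ 3) +
      bub * bubbleMultiplier d1 d2 d3 d4 d5 d6 d7 d8 := hv
  have hcorners : ∀ x y : ℝ, x ^ 2 = 1 → y ^ 2 = 1 → VanishesWithGradientAt v ![x, y] := by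
    intro x y hx hy
    rcases sq_eq_one_iff.mp hx with rfl | rfl <;> rcases sq_eq_one_iff.mp hy with rfl | rfl
    exacts [⟨hV3, hGx3, hGy3⟩, ⟨hV2, hGx2, hGy2⟩, ⟨hV4, hGx4, hGy4⟩, ⟨hV1, hGx1, hGy1⟩]
  have hmoments : NormalMomentsVanish v := by
    intro s hs
    rcases sq_eq_one_iff.mp hs with rfl | rfl
    exacts [⟨hN2, hM2, hN4, hM4⟩, ⟨hN1, hM1, hN3, hM3⟩]
  have hq : p + C c1 * X 0 ^ 3 * X 1 + C c2 * X 0 * X 1 ^ 3 = 0 := by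
    refine eq_zero_of_vanishesWithGradientAt_corners hp fun x y hx hy => ?_
    have h := (hcorners x y hx hy).sub
      (vanishesWithGradientAt_bub_mul (bubbleMultiplier d1 d2 d3 d4 d5 d6 d7 d8) hx hy)
    rwa [hv, add_sub_cancel_right] at h
  rw [hq, zero_add] at hv
  subst hv
  rw [bubbleMultiplier_eq_zero_of_normalMomentsVanish hmoments, mul_zero]
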